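/- For every integer n ≥ 2 and all real parameters γ, β: f_n(γ,β) < 1/(2(2n−1)); equivalently, n(2n−1)·(1/2 + f_n(γ,β)) < n², so the approximation ratio of level-1 QAOA for MAX-CUT on the complete graph K_{2n} is strictly less than 1. -/

import Mathlib

open Real

/-!
Put `m = 2n - 2`, `a = cos² γ`, `b = sin² γ`. Since `sin² 2β = (1 - cos 4β) / 2`, `f_n` has the
form `p sin 4β + q cos 4β - q` with `p = ½ sin γ cos^m γ` and `q = ⅛ (1 - cos(2γ)^m) ≥ 0`, so by
Cauchy–Schwarz `f_n < 1 / (2(m + 1))` as soon as `p² + q² < (q + 1 / (2(m + 1)))²`, i.e.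
`2(m + 1)² b a^m < (m + 1)(1 - (a - b)^m) + 2`. As `a + b = 1`, the odd part of the binomial
expansion gives `1 - (a - b)^m ≥ 2m b a^(m-1)`, and what is left over is controlled by
`t (1 - t) ≤ 1/4` for `t = (m + 1) b`.
-/

/-- The deviation from `1/2` of the per-edge expectation value of the level-1 QAOA
for MAX-CUT on the complete graph `K_{2n}`. -/
noncomputable def qaoaF (n : ℕ) (γ β : ℝ) : ℝ :=
  (1 / 2) * sin (4 * β) * sin γ * cos γ ^ (2 * n - 2)
    - (1 / 4) * sin (2 * β) ^ 2 * (1 - cos (2 * γ) ^ (2 * n - 2))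

theorem two_mul_mul_pow_le_add_pow_sub_sub_pow {R : Type*} [CommRing R] [LinearOrder R]
    [IsStrictOrderedRing R] {a b : R} (ha : 0 ≤ a) (hb : 0 ≤ b) (m : ℕ) :
    2 * (m + 1) * b * a ^ m ≤ (a + b) ^ (m + 1) - (a - b) ^ (m + 1) := by
  -- only the odd powers of `b` survive, all with nonnegative coefficients; the linear one is the LHS
  rw [add_comm a b, sub_eq_neg_add a b, add_pow, add_pow, ← Finset.sum_sub_distrib]
  have hterm : ∀ k ∈ Finset.range (m + 1 + 1), 0 ≤
      b ^ k * a ^ (m + 1 - k) * (m + 1).choose k - (-b) ^ k * a ^ (m + 1 - k) * (m + 1).choose k := by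
    intro k _
    rcases Nat.even_or_odd k with hk | hk
    · simp [hk.neg_pow]
    · rw [hk.neg_pow, ← sub_mul, ← sub_mul, sub_neg_eq_add]
      positivity
  convert Finset.single_le_sum hterm (Finset.mem_range.2 (by omega : 1 < m + 1 + 1)) using 1
  simp only [Nat.choose_one_right, Nat.add_sub_cancel, pow_one, Nat.cast_add, Nat.cast_one]
  ring

theorem two_mul_sq_mul_pow_lt_of_add_eq_one {R : Type*} [CommRing R] [LinearOrder R]
    [IsStrictOrderedRing R] {a b : R} (ha : 0 ≤ a) (hb : 0 ≤ b) (hab : a + b = 1) {m : ℕ} (hm : 1 ≤ m) :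
    2 * (m + 1) ^ 2 * (b * a ^ m) < (m + 1) * (1 - (a - b) ^ m) + 2 := by
  obtain ⟨k, rfl⟩ : ∃ k, m = k + 1 := ⟨m - 1, by omega⟩
  have hodd := two_mul_mul_pow_le_add_pow_sub_sub_pow ha hb k
  rw [hab, one_pow] at hodd
  have hp0 : 0 ≤ a ^ k := pow_nonneg ha k
  have hp1 : a ^ k ≤ 1 := pow_le_one₀ ha (by linarith)
  have hk : (0 : R) ≤ (k + 1 : ℕ) + 1 := by positivity
  rw [pow_succ a k, show a ^ k * a = a ^ k * (1 - b) by rw [← hab]; ring]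
  push_cast at hk ⊢
  -- beyond `hodd`, the gap is `2 - 2 a^k t (1 - t) ≥ 3/2` with `t = (k + 2) b`
  nlinarith [mul_le_mul_of_nonneg_left hodd hk,
    mul_nonneg hp0 (sq_nonneg (2 * ((k + 1 + 1) * b) - 1))]

theorem two_mul_sq_sin_mul_cos_pow_lt {m : ℕ} (hm : 1 ≤ m) (γ : ℝ) :
    2 * (m + 1) ^ 2 * (sin γ * cos γ ^ m) ^ 2 < (m + 1) * (1 - cos (2 * γ) ^ m) + 2 := by
  rw [mul_pow, ← pow_mul, mul_comm m 2, pow_mul, cos_two_mul']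
  exact two_mul_sq_mul_pow_lt_of_add_eq_one (sq_nonneg _) (sq_nonneg _) (cos_sq_add_sin_sq γ) hm

theorem mul_sin_add_mul_cos_lt {p q r : ℝ} (hr : 0 ≤ r) (h : p ^ 2 + q ^ 2 < r ^ 2) (θ : ℝ) :
    p * sin θ + q * cos θ < r := by
  have hcs : (p * sin θ + q * cos θ) ^ 2 ≤ p ^ 2 + q ^ 2 := by
    nlinarith [sin_sq_add_cos_sq θ, sq_nonneg (p * cos θ - q * sin θ)]
  exact (abs_lt_of_sq_lt_sq' (hcs.trans_lt h) hr).2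

theorem qaoa_edge_lt {m : ℕ} (hm : 1 ≤ m) (γ β : ℝ) :
    1 / 2 * sin (4 * β) * sin γ * cos γ ^ m - 1 / 4 * sin (2 * β) ^ 2 * (1 - cos (2 * γ) ^ m)
      < 1 / (2 * (m + 1)) := by
  have hkey := two_mul_sq_sin_mul_cos_pow_lt hm γ
  set A := sin γ * cos γ ^ m
  set B := 1 - cos (2 * γ) ^ m
  have hB : 0 ≤ B := sub_nonneg.2 <| (le_abs_self _).trans <|
    (abs_pow _ m).trans_le (pow_le_one₀ (abs_nonneg _) (abs_cos_le_one _))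
  have hsin : sin (2 * β) ^ 2 = (1 - cos (4 * β)) / 2 := by
    rw [show 4 * β = 2 * (2 * β) by ring, cos_two_mul_eq_one_sub]; ring
  have hr : (A / 2) ^ 2 + (B / 8) ^ 2 < (B / 8 + 1 / (2 * (m + 1))) ^ 2 := by
    field_simp
    linarith
  have hcs := mul_sin_add_mul_cos_lt (by positivity) hr (4 * β)
  rw [hsin]
  linarith

/-- For every `n ≥ 2` and all real `γ, β`: `f_n(γ,β) < 1/(2(2n-1))`; equivalently,
`n(2n-1)·(1/2 + f_n(γ,β)) < n²`, so the approximation ratio of level-1 QAOA for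
MAX-CUT on `K_{2n}` is strictly less than `1`. -/
theorem qaoa_ratio_lt_one (n : ℕ) (hn : 2 ≤ n) (γ β : ℝ) :
    qaoaF n γ β < 1 / (2 * (2 * (n : ℝ) - 1)) ∧
      (n : ℝ) * (2 * (n : ℝ) - 1) * (1 / 2 + qaoaF n γ β) < (n : ℝ) ^ 2 := by
  have hcast : ((2 * n - 2 : ℕ) : ℝ) + 1 = 2 * n - 1 := by
    rw [Nat.cast_sub (by omega)]
    push_cast
    ring
  have hlt : qaoaF n γ β < 1 / (2 * (2 * (n : ℝ) - 1)) := by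
    have h := qaoa_edge_lt (m := 2 * n - 2) (by omega) γ β
    rwa [hcast] at h
  refine ⟨hlt, ?_⟩
  have hn' : (2 : ℝ) ≤ n := by exact_mod_cast hn
  have hk : (2 * n - 1 : ℝ) ≠ 0 := by linarith
  have hpos : (0 : ℝ) < n * (2 * n - 1) := mul_pos (by linarith) (by linarith)
  calc (n : ℝ) * (2 * n - 1) * (1 / 2 + qaoaF n γ β)
      < n * (2 * n - 1) * (1 / 2 + 1 / (2 * (2 * n - 1))) := by gcongr
    _ = n ^ 2 := by
      have h : (2 * n - 1 : ℝ) * (1 / (2 * (2 * n - 1))) = 1 / 2 := by field_simp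
      linear_combination (n : ℝ) * h
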